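/- arXiv:2510.12543 — 2 statements merged into one kernel-verified Lean document; each statement's English description precedes it below -/
import Mathlib

section
/- Let B1, B2 be two boxes joined by an edge e of G^+. Let V = {B : dist_{G^+}(B, B1) ≤ 1} and let G_local be the graph on vertex set V whose edge set is (E(B) ∩ V×V) \ {e}. Then G_local contains a path from B1 to B2; moreover this path together with e forms a cycle O_e whose vertex set induces a clique in G^+. -/
open Filter Set
open scoped ENNReal NNReal Topology

noncomputable section

def torusDist {d : ℕ} (L : ℝ) (x y : Fin d → ℝ) : ℝ :=
  ⨆ k : Fin d, ⨅ m : ℤ, |x k - y k - m * L|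

lemma torusDist_symm {d : ℕ} (L : ℝ) (x y : Fin d → ℝ) :
    torusDist L x y = torusDist L y x := by
  unfold torusDist
  refine iSup_congr fun k => ?_
  rw [← sInf_range, ← sInf_range]
  congr 1
  ext r
  simp only [Set.mem_range]
  constructor
  · rintro ⟨m, rfl⟩
    refine ⟨-m, ?_⟩
    have h : y k - x k - ((-m : ℤ) : ℝ) * L = -(x k - y k - (m : ℤ) * L) := by
      push_cast; ring
    rw [h, abs_neg]
  · rintro ⟨m, rfl⟩
    refine ⟨-m, ?_⟩
    have h : x k - y k - ((-m : ℤ) : ℝ) * L = -(y k - x k - (m : ℤ) * L) := by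
      push_cast; ring
    rw [h, abs_neg]

def girgGraph {d : ℕ} (L : ℝ) {V : Type*} (pos : V → Fin d → ℝ) (wt : V → ℝ) :
    SimpleGraph V where
  Adj u v := u ≠ v ∧ torusDist L (pos u) (pos v) ^ d ≤ wt u * wt v
  symm := by
    constructor
    intro u v h
    exact ⟨h.1.symm, by rw [torusDist_symm, mul_comm]; exact h.2⟩
  loopless := ⟨fun u h => h.1 rfl⟩

/-- `wLow d i = 2^{d i / 2}`, the lower end of the weight range of a level-`i` box. -/
def wLow (d i : ℕ) : ℝ := (2 : ℝ) ^ ((d : ℝ) * i / 2)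

/-- A box of the tessellation: a level `0 ≤ level ≤ k0` together with the coordinates of
its geometric cell.  Boxes of level `< k0` are the usual boxes and the unique box of level
`k0` is the top box. -/
@[ext]
structure Box (d k0 : ℕ) where
  level : ℕ
  idx : Fin d → ℕ
  level_le : level ≤ k0
  idx_pos : ∀ k, 1 ≤ idx k
  idx_le : ∀ k, idx k ≤ 2 ^ (k0 - level)

instance (d k0 : ℕ) : Finite (Box d k0) := by
  apply Finite.of_injective (fun B : Box d k0 =>
    ((⟨B.level, Nat.lt_succ_of_le B.level_le⟩ : Fin (k0 + 1)),
      fun k => (⟨B.idx k, Nat.lt_succ_of_le ((B.idx_le k).trans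
        (Nat.pow_le_pow_right (by norm_num) (Nat.sub_le k0 B.level)))⟩ : Fin (2 ^ k0 + 1))))
  intro B1 B2 h
  simp only [Prod.mk.injEq, Fin.mk.injEq, funext_iff] at h
  exact Box.ext h.1 (funext fun k => by simpa using h.2 k)

/-- The region of the augmented space `V_w = T × [1, ∞)` occupied by a box. -/
def boxSet (d k0 : ℕ) (D0 : ℝ) (B : Box d k0) : Set ((Fin d → ℝ) × ℝ) :=
  {p | (∀ k, 2 ^ B.level * ((B.idx k : ℝ) - 1) * D0 ≤ p.1 k ∧
          p.1 k < 2 ^ B.level * (B.idx k : ℝ) * D0) ∧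
       wLow d B.level ≤ p.2 ∧ (B.level < k0 → p.2 < wLow d (B.level + 1))}

/-- Translation of an augmented point by an integer multiple of the torus period in
each geometric coordinate. -/
def torusShift {d : ℕ} (L : ℝ) (v : Fin d → ℤ) (p : (Fin d → ℝ) × ℝ) : (Fin d → ℝ) × ℝ :=
  (fun k => p.1 k + (v k : ℝ) * L, p.2)

/-- The closures of `S1` and `S2` intersect (as subsets of the torus, i.e. up to integer
translations of the geometric coordinates) in a set of Hausdorff dimension at least `δ`. -/
def meetsDim {d : ℕ} (L : ℝ) (δ : ℕ) (S1 S2 : Set ((Fin d → ℝ) × ℝ)) : Prop :=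
  ∃ v w : Fin d → ℤ,
    (δ : ℝ≥0∞) ≤ dimH (torusShift L v '' closure S1 ∩ torusShift L w '' closure S2)

/-- The closures of `S1` and `S2` intersect (as subsets of the torus). -/
def meets {d : ℕ} (L : ℝ) (S1 S2 : Set ((Fin d → ℝ) × ℝ)) : Prop :=
  ∃ v w : Fin d → ℤ,
    (torusShift L v '' closure S1 ∩ torusShift L w '' closure S2).Nonempty

/-- The graph `𝓑` on boxes: two boxes are adjacent iff their closures intersect in a
`d`-dimensional set. -/
def boxGraph (d k0 : ℕ) (D0 L : ℝ) : SimpleGraph (Box d k0) where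
  Adj B1 B2 := B1 ≠ B2 ∧ meetsDim L d (boxSet d k0 D0 B1) (boxSet d k0 D0 B2)
  symm := by
    constructor
    rintro B1 B2 ⟨h1, v, w, h⟩
    exact ⟨h1.symm, w, v, by rwa [Set.inter_comm]⟩
  loopless := ⟨fun B h => h.1 rfl⟩

/-- The graph `𝓖⁺` on boxes: two boxes are adjacent iff their closures intersect. -/
def gPlusGraph (d k0 : ℕ) (D0 L : ℝ) : SimpleGraph (Box d k0) where
  Adj B1 B2 := B1 ≠ B2 ∧ meets L (boxSet d k0 D0 B1) (boxSet d k0 D0 B2)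
  symm := by
    constructor
    rintro B1 B2 ⟨h1, v, w, h⟩
    exact ⟨h1.symm, w, v, by rwa [Set.inter_comm]⟩
  loopless := ⟨fun B h => h.1 rfl⟩

/-- The parent of a box: the box of the next level directly above it (the unique box of
minimum volume whose geometric projection strictly contains that of the given box).
The top box is its own parent. -/
def parentBox {d k0 : ℕ} (B : Box d k0) : Box d k0 :=
  if h : B.level < k0 then
    { level := B.level + 1
      idx := fun k => (B.idx k + 1) / 2
      level_le := h
      idx_pos := fun k => by
        have := B.idx_pos k
        show 1 ≤ (B.idx k + 1) / 2
        omega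
      idx_le := fun k => by
        have h1 := B.idx_le k
        have h2 : k0 - B.level = (k0 - (B.level + 1)) + 1 := by omega
        rw [h2, pow_succ] at h1
        show (B.idx k + 1) / 2 ≤ 2 ^ (k0 - (B.level + 1))
        omega }
  else B

lemma parentBox_level_le {d k0 : ℕ} (B : Box d k0) : B.level ≤ (parentBox B).level := by
  unfold parentBox
  split <;> simp

/-- The spanning tree `T_𝓑` of `𝓑`, given by the parent edges. -/
def treeGraph (d k0 : ℕ) : SimpleGraph (Box d k0) where
  Adj B1 B2 := B1 ≠ B2 ∧ (parentBox B1 = B2 ∨ parentBox B2 = B1)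
  symm := by
    constructor
    rintro B1 B2 ⟨h1, h2⟩
    exact ⟨h1.symm, h2.symm⟩
  loopless := ⟨fun B h => h.1 rfl⟩

/-- The subgraph of `G` induced by a set `R` (kept on the ambient vertex type). -/
def onSet {V : Type*} (G : SimpleGraph V) (R : Set V) : SimpleGraph V where
  Adj a b := a ∈ R ∧ b ∈ R ∧ G.Adj a b
  symm := ⟨fun _ _ h => ⟨h.2.1, h.1, h.2.2.symm⟩⟩
  loopless := ⟨fun a h => G.ne_of_adj h.2.2 rfl⟩

section Generic

variable {α : Type*}

/-- `m`-fold ancestor with respect to a parent function. -/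
def ancF (par : α → α) (B : α) (m : ℕ) : α := par^[m] B

/-- Number of steps from `B1` to the lowest common ancestor of `B1` and `B2`. -/
def lcaStepsF (par : α → α) (B1 B2 : α) : ℕ :=
  sInf {m | ∃ m', ancF par B2 m' = ancF par B1 m}

/-- Number of steps from `B2` to the lowest common ancestor of `B1` and `B2`. -/
def lcaStepsF' (par : α → α) (B1 B2 : α) : ℕ :=
  sInf {m | ancF par B2 m = ancF par B1 (lcaStepsF par B1 B2)}

/-- The canonical path `L(B1, B2)`: the unique path between `B1` and `B2` in the spanning
tree given by the parent edges, i.e. the two upward paths to the lowest common ancestor. -/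
def canonPathF (par : α → α) (B1 B2 : α) : Set α :=
  {A | ∃ m ≤ lcaStepsF par B1 B2, ancF par B1 m = A} ∪
    {A | ∃ m ≤ lcaStepsF' par B1 B2, ancF par B2 m = A}

/-- `L'(B1, B2)`: the canonical path together with everything `G⁺`-adjacent to it. -/
def extPathF (par : α → α) (Gp : SimpleGraph α) (B1 B2 : α) : Set α :=
  canonPathF par B1 B2 ∪ {B | ∃ B' ∈ canonPathF par B1 B2, Gp.Adj B B'}

/-- `W(B1, B2)`: `L'(B1, B2)` together with all connected components of inactive elements
(in `G⁺`) meeting `L'(B1, B2)`. -/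
def WsetF (par : α → α) (Gp : SimpleGraph α) (act : α → Prop) (B1 B2 : α) : Set α :=
  extPathF par Gp B1 B2 ∪
    {B | ¬ act B ∧ ∃ B' ∈ extPathF par Gp B1 B2, ¬ act B' ∧
      (onSet Gp {C | ¬ act C}).Reachable B' B}

/-- `S(B1, B2)`: the elements outside `W(B1, B2)` that are `G⁺`-adjacent to it
(they are automatically active). -/
def SsetF (par : α → α) (Gp : SimpleGraph α) (act : α → Prop) (B1 B2 : α) : Set α :=
  {B | B ∉ WsetF par Gp act B1 B2 ∧ ∃ B' ∈ WsetF par Gp act B1 B2, Gp.Adj B B'}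

/-- The boundary of `C` visible from `x`: elements `G⁺`-adjacent to `C` that are connected
to `x` in `𝓑` with `C` removed. -/
def visBoundaryF (Gb Gp : SimpleGraph α) (C : Set α) (x : α) : Set α :=
  {B' | (∃ B'' ∈ C, Gp.Adj B' B'') ∧ (onSet Gb Cᶜ).Reachable x B'}

end Generic

/-- A box is active if it contains the augmented point of at least one vertex. -/
def isActive (d k0 : ℕ) (D0 : ℝ) {V : Type*} (pos : V → Fin d → ℝ) (wt : V → ℝ)
    (B : Box d k0) : Prop :=
  ∃ u, (pos u, wt u) ∈ boxSet d k0 D0 B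

end

/-! The edge `B1B2` of `𝓖⁺` means that the closures of the two boxes share a point `(x, ω)` of
the torus. If one box is the parent of the other, the child, its parent and a sibling of the
child form a triangle of `𝓑`. Otherwise the levels differ by at most one; replacing a box by its
parent where needed brings both to a common level `μ`, and changing the cell indices one
coordinate at a time walks from one lift to the other through boxes of level `μ`, consecutive
ones sharing a facet. Every box on this route touches the point `(x, 2^{dμ/2})`, so the route
lies in a clique of `𝓖⁺`. None of its edges is `B1B2`: each either joins `B1` or `B2` to its
parent, which is not the other box, or joins two boxes of level `μ`, and `B1`, `B2` are not both
of level `μ`. -/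

section Boxes

variable {d k0 : ℕ} {D0 L : ℝ}

def weightClosure (d k0 l : ℕ) : Set ℝ :=
  if l < k0 then Icc (wLow d l) (wLow d (l + 1)) else Ici (wLow d l)

lemma wLow_strictMono (hd : 0 < d) : StrictMono (wLow d) := fun i j hij => by
  unfold wLow
  apply Real.rpow_lt_rpow_of_exponent_lt one_lt_two
  have : (i : ℝ) < j := by exact_mod_cast hij
  have : (0 : ℝ) < d := by exact_mod_cast hd
  gcongr

lemma Icc_wLow_subset_weightClosure (l : ℕ) :
    Icc (wLow d l) (wLow d (l + 1)) ⊆ weightClosure d k0 l := by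
  unfold weightClosure
  split
  · exact subset_rfl
  · exact fun _ hw => hw.1

lemma wLow_mem_weightClosure (hd : 0 < d) {l μ : ℕ} (h : l = μ ∨ l + 1 = μ) :
    wLow d μ ∈ weightClosure d k0 l := by
  have hle := (wLow_strictMono hd (Nat.lt_succ_self l)).le
  apply Icc_wLow_subset_weightClosure
  rcases h with rfl | rfl
  exacts [⟨le_rfl, hle⟩, ⟨hle, le_rfl⟩]

lemma natCast_le_two_mul_succ_div_two (j : ℕ) :
    (j : ℝ) ≤ 2 * (((j + 1) / 2 : ℕ) : ℝ) ∧ 2 * (((j + 1) / 2 : ℕ) : ℝ) ≤ j + 1 := by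
  exact_mod_cast (by omega : j ≤ 2 * ((j + 1) / 2) ∧ 2 * ((j + 1) / 2) ≤ j + 1)

namespace Box

def cellLo (D0 : ℝ) (B : Box d k0) (k : Fin d) : ℝ := 2 ^ B.level * ((B.idx k : ℝ) - 1) * D0

def cellHi (D0 : ℝ) (B : Box d k0) (k : Fin d) : ℝ := 2 ^ B.level * (B.idx k : ℝ) * D0

lemma cellLo_lt_cellHi (hD0 : 0 < D0) (B : Box d k0) (k : Fin d) :
    B.cellLo D0 k < B.cellHi D0 k := by
  unfold cellLo cellHi
  have : (0 : ℝ) < 2 ^ B.level := by positivity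
  gcongr
  linarith

def CellTouches (D0 L : ℝ) (B : Box d k0) (x : Fin d → ℝ) : Prop :=
  ∀ k, ∃ m : ℤ, x k + m * L ∈ Icc (B.cellLo D0 k) (B.cellHi D0 k)

/-- `(x, ω)` lies in the closure of `B` up to translating `x` by multiples of `L` in each
coordinate. -/
def Touches (D0 L : ℝ) (B : Box d k0) (x : Fin d → ℝ) (ω : ℝ) : Prop :=
  B.CellTouches D0 L x ∧ ω ∈ weightClosure d k0 B.level

lemma eq_of_level_eq_top {X Y : Box d k0} (hX : X.level = k0) (hY : Y.level = k0) : X = Y := by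
  refine Box.ext (hX.trans hY.symm) (funext fun k => ?_)
  have hX1 := X.idx_le k
  have hY1 := Y.idx_le k
  rw [hX, Nat.sub_self, pow_zero] at hX1
  rw [hY, Nat.sub_self, pow_zero] at hY1
  have := X.idx_pos k
  have := Y.idx_pos k
  omega

lemma level_le_succ_of_mem_weightClosure (hd : 0 < d) {B1 B2 : Box d k0} {ω : ℝ}
    (h1 : ω ∈ weightClosure d k0 B1.level) (h2 : ω ∈ weightClosure d k0 B2.level) :
    B2.level ≤ B1.level + 1 := by
  by_contra! hlt
  have hB1 : B1.level < k0 := by have := B2.level_le; omega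
  rw [weightClosure, if_pos hB1] at h1
  have hw2 : wLow d B2.level ≤ ω := by
    unfold weightClosure at h2
    split at h2
    exacts [h2.1, h2]
  have := wLow_strictMono hd hlt
  linarith [h1.2]

lemma exists_common_level (hd : 0 < d) {B1 B2 : Box d k0} (hne : B1 ≠ B2) {ω : ℝ}
    (h1 : ω ∈ weightClosure d k0 B1.level) (h2 : ω ∈ weightClosure d k0 B2.level) :
    ∃ μ ≤ k0, (B1.level = μ ∨ B1.level + 1 = μ) ∧ (B2.level = μ ∨ B2.level + 1 = μ) ∧
      ¬(B1.level = μ ∧ B2.level = μ) := by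
  have h21 := level_le_succ_of_mem_weightClosure hd h1 h2
  have h12 := level_le_succ_of_mem_weightClosure hd h2 h1
  have := B1.level_le
  have := B2.level_le
  by_cases heq : B1.level = B2.level
  · have : B1.level ≠ k0 := fun h => hne (eq_of_level_eq_top h (heq ▸ h))
    exact ⟨B1.level + 1, by omega, by omega, by omega, by omega⟩
  · exact ⟨max B1.level B2.level, by omega, by omega, by omega, by omega⟩

lemma level_lt_of_parentBox_ne {B : Box d k0} (h : parentBox B ≠ B) : B.level < k0 := by
  by_contra hB
  exact h (dif_neg hB)

lemma parentBox_level {B : Box d k0} (h : B.level < k0) :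
    (parentBox B).level = B.level + 1 := by
  rw [parentBox, dif_pos h]

lemma parentBox_idx {B : Box d k0} (h : B.level < k0) (k : Fin d) :
    (parentBox B).idx k = (B.idx k + 1) / 2 := by
  rw [parentBox, dif_pos h]

lemma cell_subset_parentBox (hD0 : 0 < D0) (B : Box d k0) (k : Fin d) :
    (parentBox B).cellLo D0 k ≤ B.cellLo D0 k ∧ B.cellHi D0 k ≤ (parentBox B).cellHi D0 k := by
  by_cases h : B.level < k0
  · simp only [cellLo, cellHi, parentBox, dif_pos h]
    have hj' := natCast_le_two_mul_succ_div_two (B.idx k)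
    rw [pow_succ, mul_assoc (2 ^ B.level : ℝ) 2, mul_assoc (2 ^ B.level : ℝ) 2]
    constructor <;> gcongr <;> linarith
  · simp only [parentBox, dif_neg h, le_refl, and_self]

lemma parentMidpoint_mem_Icc (hD0 : 0 < D0) (B : Box d k0) (k : Fin d) :
    (2 : ℝ) ^ B.level * (2 * (((B.idx k + 1) / 2 : ℕ) : ℝ) - 1) * D0 ∈
      Icc (B.cellLo D0 k) (B.cellHi D0 k) := by
  have := natCast_le_two_mul_succ_div_two (B.idx k)
  constructor <;> simp only [cellLo, cellHi] <;> gcongr <;> linarith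

lemma cellTouches_parentBox (hD0 : 0 < D0) {B : Box d k0} {x : Fin d → ℝ}
    (hB : B.CellTouches D0 L x) : (parentBox B).CellTouches D0 L x := fun k => by
  obtain ⟨m, hm⟩ := hB k
  have := cell_subset_parentBox hD0 B k
  exact ⟨m, this.1.trans hm.1, hm.2.trans this.2⟩

lemma CellTouches.exists_lift (hD0 : 0 < D0) {B : Box d k0} {x : Fin d → ℝ}
    (hB : B.CellTouches D0 L x) {μ : ℕ} (hμ : B.level = μ ∨ B.level + 1 = μ) (hμk : μ ≤ k0) :
    ∃ H : Box d k0, H.level = μ ∧ H.CellTouches D0 L x ∧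
      (H = B ∨ H = parentBox B ∧ B.level < k0) := by
  rcases hμ with rfl | rfl
  · exact ⟨B, rfl, hB, Or.inl rfl⟩
  · exact ⟨parentBox B, parentBox_level (by omega), cellTouches_parentBox hD0 hB,
      Or.inr ⟨rfl, by omega⟩⟩

def interpolate (Y Z : Box d k0) (h : Y.level = Z.level) (t : ℕ) : Box d k0 where
  level := Y.level
  idx k := if (k : ℕ) < t then Z.idx k else Y.idx k
  level_le := Y.level_le
  idx_pos k := by
    split
    exacts [Z.idx_pos k, Y.idx_pos k]
  idx_le k := by
    split
    · exact h ▸ Z.idx_le k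
    · exact Y.idx_le k

lemma interpolate_zero (Y Z : Box d k0) (h : Y.level = Z.level) : Y.interpolate Z h 0 = Y := by
  ext <;> simp [interpolate]

lemma interpolate_dim (Y Z : Box d k0) (h : Y.level = Z.level) : Y.interpolate Z h d = Z := by
  ext <;> simp [interpolate, h]

lemma interpolate_cellTouches {Y Z : Box d k0} (h : Y.level = Z.level) {x : Fin d → ℝ}
    (hY : Y.CellTouches D0 L x) (hZ : Z.CellTouches D0 L x) (t : ℕ) :
    (Y.interpolate Z h t).CellTouches D0 L x := fun k => by
  by_cases hk : (k : ℕ) < t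
  · simpa [interpolate, cellLo, cellHi, hk, h] using hZ k
  · simpa [interpolate, cellLo, cellHi, hk] using hY k

end Box

end Boxes

section Adjacency

variable {d k0 : ℕ} {D0 L : ℝ}

lemma mem_closure_boxSet (hd : 0 < d) (hD0 : 0 < D0) (B : Box d k0) (p : (Fin d → ℝ) × ℝ) :
    p ∈ closure (boxSet d k0 D0 B) ↔
      (∀ k, p.1 k ∈ Icc (B.cellLo D0 k) (B.cellHi D0 k)) ∧ p.2 ∈ weightClosure d k0 B.level := by
  have hprod : boxSet d k0 D0 B = (univ.pi fun k => Ico (B.cellLo D0 k) (B.cellHi D0 k)) ×ˢ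
      (if B.level < k0 then Ico (wLow d B.level) (wLow d (B.level + 1))
        else Ici (wLow d B.level)) := by
    ext ⟨y, ω⟩
    by_cases h : B.level < k0 <;>
      simp [boxSet, Box.cellLo, Box.cellHi, h, forall_and]
  have hw : closure (if B.level < k0 then Ico (wLow d B.level) (wLow d (B.level + 1))
      else Ici (wLow d B.level)) = weightClosure d k0 B.level := by
    unfold weightClosure
    split
    · exact closure_Ico (wLow_strictMono hd (Nat.lt_succ_self _)).ne
    · exact closure_Ici _
  rw [hprod, closure_prod_eq, closure_pi_set, hw, mem_prod, mem_univ_pi]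
  simp only [closure_Ico (B.cellLo_lt_cellHi hD0 _).ne]

lemma mem_torusShift_image {v : Fin d → ℤ} {S : Set ((Fin d → ℝ) × ℝ)}
    {p : (Fin d → ℝ) × ℝ} : p ∈ torusShift L v '' S ↔ torusShift L (-v) p ∈ S := by
  have hinv : ∀ w : Fin d → ℤ, ∀ q, torusShift L (-w) (torusShift L w q) = q := fun w q => by
    ext k <;> simp [torusShift]
  constructor
  · rintro ⟨q, hq, rfl⟩
    rwa [hinv]
  · intro hp
    exact ⟨_, hp, by simpa using hinv (-v) p⟩

lemma Box.touches_iff_exists_torusShift_mem_closure (hd : 0 < d) (hD0 : 0 < D0) (B : Box d k0)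
    (x : Fin d → ℝ) (ω : ℝ) :
    B.Touches D0 L x ω ↔ ∃ σ : Fin d → ℤ, torusShift L σ (x, ω) ∈ closure (boxSet d k0 D0 B) := by
  simp only [mem_closure_boxSet hd hD0, Box.Touches, Box.CellTouches, torusShift,
    ← exists_and_right, Classical.skolem]

lemma gPlusGraph_adj_iff (hd : 0 < d) (hD0 : 0 < D0) {Y Z : Box d k0} :
    (gPlusGraph d k0 D0 L).Adj Y Z ↔ Y ≠ Z ∧ ∃ x ω, Y.Touches D0 L x ω ∧ Z.Touches D0 L x ω := by
  simp only [Box.touches_iff_exists_torusShift_mem_closure hd hD0]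
  refine and_congr_right fun _ => ⟨?_, ?_⟩
  · rintro ⟨v, w, ⟨x, ω⟩, hY, hZ⟩
    rw [mem_torusShift_image] at hY hZ
    exact ⟨x, ω, ⟨-v, hY⟩, ⟨-w, hZ⟩⟩
  · rintro ⟨x, ω, ⟨σY, hY⟩, ⟨σZ, hZ⟩⟩
    refine ⟨-σY, -σZ, (x, ω), ?_, ?_⟩ <;> rwa [mem_torusShift_image, neg_neg]

lemma pairwise_gPlusGraph_adj_of_touches (hd : 0 < d) (hD0 : 0 < D0) (x : Fin d → ℝ) (ω : ℝ) :
    {B : Box d k0 | B.Touches D0 L x ω}.Pairwise (gPlusGraph d k0 D0 L).Adj :=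
  fun _ hY _ hZ hne => (gPlusGraph_adj_iff hd hD0).2 ⟨hne, x, ω, hY, hZ⟩

lemma boxGraph_le_gPlusGraph (hd : 0 < d) : boxGraph d k0 D0 L ≤ gPlusGraph d k0 D0 L := by
  rintro Y Z ⟨hne, v, w, hdim⟩
  refine ⟨hne, v, w, nonempty_iff_ne_empty.2 fun hempty => ?_⟩
  rw [hempty, dimH_empty, nonpos_iff_eq_zero, Nat.cast_eq_zero] at hdim
  omega

lemma natCast_le_dimH_image_pi_Icc {X : Type*} [EMetricSpace X] {K : ℝ≥0}
    {f : (Fin d → ℝ) → X} (hf : AntilipschitzWith K f) {a b : Fin d → ℝ} (hab : ∀ k, a k < b k) :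
    (d : ℝ≥0∞) ≤ dimH (f '' univ.pi fun k => Icc (a k) (b k)) := by
  have hmid : (univ.pi fun k => Icc (a k) (b k)) ∈ 𝓝 fun k => (a k + b k) / 2 := by
    refine mem_of_superset ?_ (pi_mono fun k _ => Ioo_subset_Icc_self)
    exact (isOpen_set_pi finite_univ fun k _ => isOpen_Ioo).mem_nhds
      fun k _ => ⟨by linarith [hab k], by linarith [hab k]⟩
  calc (d : ℝ≥0∞) = dimH (univ.pi fun k => Icc (a k) (b k)) := by
        rw [Real.dimH_of_mem_nhds hmid, Module.finrank_fin_fun]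
    _ ≤ _ := hf.le_dimH_image _

lemma antilipschitzWith_update_prod {ι : Type*} [Fintype ι] [DecidableEq ι] (t : ι) (c : ℝ) :
    AntilipschitzWith 1 fun y : ι → ℝ => (Function.update y t c, y t) := by
  refine AntilipschitzWith.of_le_mul_dist fun y y' => ?_
  rw [NNReal.coe_one, one_mul, dist_pi_le_iff (by positivity)]
  intro k
  by_cases hk : k = t
  · subst hk
    exact le_max_right _ _
  · refine le_max_of_le_left ?_
    simpa [hk] using dist_le_pi_dist (Function.update y t c) (Function.update y' t c) k

lemma boxGraph_adj_of_cell_subset (hd : 0 < d) (hD0 : 0 < D0) {Y Z : Box d k0} (hne : Y ≠ Z)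
    (hsub : ∀ k, Z.cellLo D0 k ≤ Y.cellLo D0 k ∧ Y.cellHi D0 k ≤ Z.cellHi D0 k) {w : ℝ}
    (hwY : w ∈ weightClosure d k0 Y.level) (hwZ : w ∈ weightClosure d k0 Z.level) :
    (boxGraph d k0 D0 L).Adj Y Z := by
  have hf : AntilipschitzWith 1 fun y : Fin d → ℝ => (y, w) :=
    AntilipschitzWith.of_le_mul_dist fun y y' => by simp [Prod.dist_eq]
  refine ⟨hne, 0, 0, (natCast_le_dimH_image_pi_Icc hf fun k => Y.cellLo_lt_cellHi hD0 k).trans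
    (dimH_mono ?_)⟩
  rintro _ ⟨y, hy, rfl⟩
  simp only [mem_inter_iff, mem_torusShift_image, neg_zero]
  have hy0 : torusShift L (0 : Fin d → ℤ) (y, w) = (y, w) := by ext <;> simp [torusShift]
  rw [hy0, mem_closure_boxSet hd hD0, mem_closure_boxSet hd hD0]
  refine ⟨⟨fun k => hy k trivial, hwY⟩, fun k => ?_, hwZ⟩
  exact ⟨(hsub k).1.trans (hy k trivial).1, (hy k trivial).2.trans (hsub k).2⟩

lemma boxGraph_adj_of_shared_facet (hd : 0 < d) (hD0 : 0 < D0) {Y Z : Box d k0} (hne : Y ≠ Z)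
    (hl : Y.level = Z.level) (t : Fin d) (hidx : ∀ k ≠ t, Y.idx k = Z.idx k) {c : ℝ} {mY mZ : ℤ}
    (hY : c + mY * L ∈ Icc (Y.cellLo D0 t) (Y.cellHi D0 t))
    (hZ : c + mZ * L ∈ Icc (Z.cellLo D0 t) (Z.cellHi D0 t)) :
    (boxGraph d k0 D0 L).Adj Y Z := by
  -- The common facet is only `(d - 1)`-dimensional; the weight interval supplies the missing
  -- dimension, parametrised by the `t`-th coordinate of the cube.
  set a : Fin d → ℝ := Function.update (Y.cellLo D0) t (wLow d Y.level)
  set b : Fin d → ℝ := Function.update (Y.cellHi D0) t (wLow d (Y.level + 1))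
  have hab : ∀ k, a k < b k := fun k => by
    by_cases hk : k = t
    · subst hk
      simpa [a, b] using wLow_strictMono hd (Nat.lt_succ_self Y.level)
    · simpa [a, b, hk] using Y.cellLo_lt_cellHi hD0 k
  have hmem : ∀ W : Box d k0, W.level = Y.level → (∀ k ≠ t, W.idx k = Y.idx k) → ∀ m : ℤ,
      c + m * L ∈ Icc (W.cellLo D0 t) (W.cellHi D0 t) → ∀ y ∈ univ.pi fun k => Icc (a k) (b k),
      (Function.update y t c, y t) ∈
        torusShift L (-Pi.single t m) '' closure (boxSet d k0 D0 W) := by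
    intro W hWl hWidx m hm y hy
    rw [mem_torusShift_image, neg_neg, mem_closure_boxSet hd hD0]
    refine ⟨fun k => ?_, ?_⟩
    · by_cases hk : k = t
      · subst hk
        simpa [torusShift] using hm
      · have hyk := hy k trivial
        simp only [a, b, Function.update_of_ne hk] at hyk
        simpa [torusShift, hk, Box.cellLo, Box.cellHi, hWl, hWidx k hk] using hyk
    · have hyt := hy t trivial
      simp only [a, b, Function.update_self] at hyt
      exact hWl ▸ Icc_wLow_subset_weightClosure _ hyt
  refine ⟨hne, -Pi.single t mY, -Pi.single t mZ,
    (natCast_le_dimH_image_pi_Icc (antilipschitzWith_update_prod t c) hab).trans (dimH_mono ?_)⟩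
  rintro _ ⟨y, hy, rfl⟩
  exact ⟨hmem Y rfl (fun _ _ => rfl) mY hY y hy,
    hmem Z hl.symm (fun k hk => (hidx k hk).symm) mZ hZ y hy⟩

lemma boxGraph_adj_parentBox (hd : 0 < d) (hD0 : 0 < D0) {B : Box d k0} (h : B.level < k0) :
    (boxGraph d k0 D0 L).Adj B (parentBox B) := by
  refine boxGraph_adj_of_cell_subset hd hD0 (fun hB => ?_) (Box.cell_subset_parentBox hD0 B)
    (wLow_mem_weightClosure hd (Or.inr rfl))
    (wLow_mem_weightClosure hd (Or.inl (Box.parentBox_level h)))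
  have := congrArg Box.level hB
  rw [Box.parentBox_level h] at this
  omega

lemma Box.exists_sibling (hd : 0 < d) (hD0 : 0 < D0) {C : Box d k0} (hC : C.level < k0) :
    ∃ C' : Box d k0, C' ≠ C ∧ C'.level = C.level ∧ parentBox C' = parentBox C ∧
      (boxGraph d k0 D0 L).Adj C C' := by
  set t : Fin d := ⟨0, hd⟩
  set j := C.idx t
  set j' := if j % 2 = 0 then j - 1 else j + 1
  have hj := C.idx_pos t
  have hjle := C.idx_le t
  have heven : 2 ^ (k0 - C.level) = 2 * 2 ^ (k0 - C.level - 1) := by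
    rw [← pow_succ']
    congr 1
    omega
  have hj'1 : 1 ≤ j' := by grind
  have hj'le : j' ≤ 2 ^ (k0 - C.level) := by grind
  have hj'j : j' ≠ j := by grind
  have hpar : (j' + 1) / 2 = (j + 1) / 2 := by grind
  let C' : Box d k0 :=
    { level := C.level
      idx := Function.update C.idx t j'
      level_le := C.level_le
      idx_pos := fun k => by
        rcases eq_or_ne k t with rfl | hk
        · simpa using hj'1
        · simpa [hk] using C.idx_pos k
      idx_le := fun k => by
        rcases eq_or_ne k t with rfl | hk
        · simpa using hj'le
        · simpa [hk] using C.idx_le k }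
  have hC't : C'.idx t = j' := by simp [C']
  have hC'par : parentBox C' = parentBox C := by
    have hC' : C'.level < k0 := hC
    refine Box.ext (by rw [Box.parentBox_level hC, Box.parentBox_level hC']) (funext fun k => ?_)
    rw [Box.parentBox_idx hC', Box.parentBox_idx hC]
    rcases eq_or_ne k t with rfl | hk
    · rw [hC't, hpar]
    · simp [C', hk]
  have hne : C' ≠ C := fun h => hj'j (by rw [← hC't, h])
  refine ⟨C', hne, rfl, hC'par, boxGraph_adj_of_shared_facet hd hD0 hne.symm rfl t
    (fun k hk => by simp [C', hk]) (mY := 0) (mZ := 0)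
    (by simpa using C.parentMidpoint_mem_Icc hD0 t) ?_⟩
  simpa [hC't, hpar] using C'.parentMidpoint_mem_Icc hD0 t

lemma reachable_of_cellTouches (hd : 0 < d) (hD0 : 0 < D0) {x : Fin d → ℝ} {l : ℕ}
    {Y Z : Box d k0} (hY : Y.level = l) (hZ : Z.level = l) (hTY : Y.CellTouches D0 L x)
    (hTZ : Z.CellTouches D0 L x) :
    (onSet (boxGraph d k0 D0 L) {B | B.level = l ∧ B.CellTouches D0 L x}).Reachable Y Z := by
  set X := Y.interpolate Z (hY.trans hZ.symm)
  have hX : ∀ t, X t ∈ {B : Box d k0 | B.level = l ∧ B.CellTouches D0 L x} := fun t =>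
    ⟨hY, Box.interpolate_cellTouches _ hTY hTZ t⟩
  have hstep : ∀ t (ht : t < d), (onSet (boxGraph d k0 D0 L)
      {B | B.level = l ∧ B.CellTouches D0 L x}).Reachable (X t) (X (t + 1)) := by
    intro t ht
    by_cases heq : X t = X (t + 1)
    · rw [heq]
    obtain ⟨mY, hmY⟩ := (hX t).2 ⟨t, ht⟩
    obtain ⟨mZ, hmZ⟩ := (hX (t + 1)).2 ⟨t, ht⟩
    refine SimpleGraph.Adj.reachable ⟨hX t, hX (t + 1), boxGraph_adj_of_shared_facet hd hD0 heq
      rfl ⟨t, ht⟩ (fun k hk => ?_) hmY hmZ⟩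
    have hk' : (k : ℕ) ≠ t := fun h => hk (Fin.ext h)
    simp only [X, Box.interpolate]
    split_ifs <;> first | rfl | omega
  have hreach : ∀ t ≤ d, (onSet (boxGraph d k0 D0 L)
      {B | B.level = l ∧ B.CellTouches D0 L x}).Reachable Y (X t) := by
    intro t
    induction t with
    | zero => simp [X, Box.interpolate_zero]
    | succ t ih => exact fun ht => (ih (by omega)).trans (hstep t ht)
  simpa [X, Box.interpolate_dim] using hreach d le_rfl

end Adjacency

section Paths

variable {V : Type*} {G H : SimpleGraph V} {S : Set V}

lemma onSet_mono {T : Set V} (h : S ⊆ T) : onSet G S ≤ onSet G T :=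
  fun _ _ hab => ⟨h hab.1, h hab.2.1, hab.2.2⟩

lemma onSet_deleteEdges_adj {u v a b : V} :
    (onSet (G.deleteEdges {s(u, v)}) S).Adj a b ↔
      a ∈ S ∧ b ∈ S ∧ G.Adj a b ∧ s(a, b) ≠ s(u, v) := by
  simp [onSet, SimpleGraph.deleteEdges_adj]

lemma mem_of_mem_support_onSet {u v : V} (p : (onSet G S).Walk u v) (hu : u ∈ S) :
    ∀ x ∈ p.support, x ∈ S := by
  induction p with
  | nil => simpa using hu
  | cons h p ih =>
    simp only [SimpleGraph.Walk.support_cons, List.mem_cons, forall_eq_or_imp]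
    exact ⟨hu, ih h.2.1⟩

lemma exists_isPath_of_reachable_onSet {a b : V} (hab : a ≠ b) (hS : S.Pairwise H.Adj)
    (hr : (onSet G S).Reachable a b) :
    ∃ p : (onSet G {x | x = a ∨ H.Adj x a}).Walk a b,
      p.IsPath ∧ ∀ x ∈ p.support, ∀ y ∈ p.support, x ≠ y → H.Adj x y := by
  obtain ⟨q, hq⟩ := hr.exists_isPath
  have ha : a ∈ S := by
    cases q with
    | nil => exact absurd rfl hab
    | cons h _ => exact h.1
  have hsupp := mem_of_mem_support_onSet q ha
  have hST : S ⊆ {x | x = a ∨ H.Adj x a} := fun x hx =>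
    (eq_or_ne x a).imp_right fun hxa => hS hx ha hxa
  refine ⟨q.mapLe (onSet_mono hST), hq.mapLe _, ?_⟩
  simp only [SimpleGraph.Walk.support_mapLe_eq_support]
  exact fun x hx y hy hxy => hS (hsupp x hx) (hsupp y hy) hxy

end Paths

section Detours

variable {d k0 : ℕ} {D0 L : ℝ}

def IsCliqueDetour (D0 L : ℝ) (B1 B2 : Box d k0) (S : Set (Box d k0)) : Prop :=
  S.Pairwise (gPlusGraph d k0 D0 L).Adj ∧
    (onSet ((boxGraph d k0 D0 L).deleteEdges {s(B1, B2)}) S).Reachable B1 B2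

lemma IsCliqueDetour.symm {B1 B2 : Box d k0} {S : Set (Box d k0)}
    (h : IsCliqueDetour D0 L B1 B2 S) : IsCliqueDetour D0 L B2 B1 S :=
  ⟨h.1, by rw [Sym2.eq_swap]; exact h.2.symm⟩

lemma exists_isCliqueDetour_parentBox (hd : 0 < d) (hD0 : 0 < D0) {C : Box d k0}
    (hC : C.level < k0) : ∃ S, IsCliqueDetour D0 L C (parentBox C) S := by
  obtain ⟨C', hne, hl, hpar, hCC'⟩ := Box.exists_sibling (L := L) hd hD0 hC
  have hCP : (boxGraph d k0 D0 L).Adj C (parentBox C) := boxGraph_adj_parentBox hd hD0 hC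
  have hC'P : (boxGraph d k0 D0 L).Adj C' (parentBox C) :=
    hpar ▸ boxGraph_adj_parentBox hd hD0 (hl ▸ hC)
  set S : Set (Box d k0) := {C, C', parentBox C}
  have hclique : (boxGraph d k0 D0 L).IsClique S := by
    simp only [S, SimpleGraph.isClique_insert, SimpleGraph.isClique_singleton, Set.mem_insert_iff,
      Set.mem_singleton_iff, forall_eq_or_imp, forall_eq]
    exact ⟨⟨trivial, fun _ => hC'P⟩, fun _ => hCC', fun _ => hCP⟩
  refine ⟨S, hclique.mono (boxGraph_le_gPlusGraph hd), ?_⟩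
  set K := onSet ((boxGraph d k0 D0 L).deleteEdges {s(C, parentBox C)}) S
  have h1 : K.Adj C C' :=
    onSet_deleteEdges_adj.2 ⟨by simp [S], by simp [S], hCC', Sym2.congr_right.not.2 hC'P.ne⟩
  have h2 : K.Adj C' (parentBox C) :=
    onSet_deleteEdges_adj.2 ⟨by simp [S], by simp [S], hC'P, Sym2.congr_left.not.2 hne⟩
  exact h1.reachable.trans h2.reachable

lemma reachable_of_eq_or_eq_parentBox (hd : 0 < d) (hD0 : 0 < D0) {S : Set (Box d k0)}
    {B O H : Box d k0} (hB : B ∈ S) (hH : H ∈ S) (hBO : parentBox B ≠ O)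
    (hHB : H = B ∨ H = parentBox B ∧ B.level < k0) :
    (onSet ((boxGraph d k0 D0 L).deleteEdges {s(B, O)}) S).Reachable B H := by
  rcases hHB with rfl | ⟨rfl, hl⟩
  · rfl
  · exact (onSet_deleteEdges_adj.2 ⟨hB, hH, boxGraph_adj_parentBox hd hD0 hl,
      Sym2.congr_right.not.2 hBO⟩).reachable

lemma exists_isCliqueDetour_of_touches (hd : 0 < d) (hD0 : 0 < D0) {B1 B2 : Box d k0}
    {x : Fin d → ℝ} {ω : ℝ} (hne : B1 ≠ B2) (h12 : parentBox B1 ≠ B2) (h21 : parentBox B2 ≠ B1)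
    (hT1 : B1.Touches D0 L x ω) (hT2 : B2.Touches D0 L x ω) :
    ∃ S, IsCliqueDetour D0 L B1 B2 S := by
  obtain ⟨μ, hμk, hμ1, hμ2, hnot⟩ := Box.exists_common_level hd hne hT1.2 hT2.2
  obtain ⟨H1, hH1l, hH1T, hH1⟩ := hT1.1.exists_lift hD0 hμ1 hμk
  obtain ⟨H2, hH2l, hH2T, hH2⟩ := hT2.1.exists_lift hD0 hμ2 hμk
  set S := {B : Box d k0 | B.Touches D0 L x (wLow d μ)}
  have hmem : ∀ B : Box d k0, B.CellTouches D0 L x → (B.level = μ ∨ B.level + 1 = μ) → B ∈ S :=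
    fun B hB hl => ⟨hB, wLow_mem_weightClosure hd hl⟩
  refine ⟨S, pairwise_gPlusGraph_adj_of_touches hd hD0 x _, ?_⟩
  have hlevel : onSet (boxGraph d k0 D0 L) {B | B.level = μ ∧ B.CellTouches D0 L x} ≤
      onSet ((boxGraph d k0 D0 L).deleteEdges {s(B1, B2)}) S := by
    rintro a b ⟨ha, hb, hab⟩
    refine onSet_deleteEdges_adj.2 ⟨hmem a ha.2 (Or.inl ha.1), hmem b hb.2 (Or.inl hb.1), hab, ?_⟩
    rw [Ne, Sym2.eq_iff]
    rintro (⟨rfl, rfl⟩ | ⟨rfl, rfl⟩)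
    exacts [hnot ⟨ha.1, hb.1⟩, hnot ⟨hb.1, ha.1⟩]
  have hchain := (reachable_of_cellTouches hd hD0 hH1l hH2l hH1T hH2T).mono hlevel
  have h1 := reachable_of_eq_or_eq_parentBox (L := L) hd hD0 (hmem B1 hT1.1 hμ1)
    (hmem H1 hH1T (Or.inl hH1l)) h12 hH1
  have h2 := reachable_of_eq_or_eq_parentBox (L := L) hd hD0 (hmem B2 hT2.1 hμ2)
    (hmem H2 hH2T (Or.inl hH2l)) h21 hH2
  rw [Sym2.eq_swap] at h2
  exact h1.trans (hchain.trans h2.symm)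

end Detours

theorem statement_6_general (d : ℕ) (hd : 1 ≤ d) (n k0 : ℕ) (D0 : ℝ) (hD0 : 0 < D0)
    (B1 B2 : Box d k0)
    (he : (gPlusGraph d k0 D0 ((n : ℝ) ^ ((1 : ℝ) / d))).Adj B1 B2) :
    ∃ p : (onSet
        ((boxGraph d k0 D0 ((n : ℝ) ^ ((1 : ℝ) / d))).deleteEdges {s(B1, B2)})
        {B | B = B1 ∨ (gPlusGraph d k0 D0 ((n : ℝ) ^ ((1 : ℝ) / d))).Adj B B1}).Walk B1 B2,
      p.IsPath ∧
      ∀ a ∈ p.support, ∀ b ∈ p.support, a ≠ b →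
        (gPlusGraph d k0 D0 ((n : ℝ) ^ ((1 : ℝ) / d))).Adj a b := by
  set L : ℝ := (n : ℝ) ^ ((1 : ℝ) / d)
  obtain ⟨hne, x, ω, hT1, hT2⟩ := (gPlusGraph_adj_iff hd hD0).1 he
  obtain ⟨S, hclique, hreach⟩ : ∃ S, IsCliqueDetour D0 L B1 B2 S := by
    by_cases h12 : parentBox B1 = B2
    · subst h12
      exact exists_isCliqueDetour_parentBox hd hD0 (Box.level_lt_of_parentBox_ne hne.symm)
    by_cases h21 : parentBox B2 = B1
    · subst h21
      obtain ⟨S, hS⟩ := exists_isCliqueDetour_parentBox hd hD0 (Box.level_lt_of_parentBox_ne hne)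
      exact ⟨S, hS.symm⟩
    exact exists_isCliqueDetour_of_touches hd hD0 hne h12 h21 hT1 hT2
  exact exists_isPath_of_reachable_onSet hne hclique hreach

/-- Let `B1, B2` be two boxes joined by an edge `e` of `𝓖⁺`.  In the graph
`G_local` on the vertex set `V = {B : dist_{𝓖⁺}(B, B1) ≤ 1}` whose edges are the edges of `𝓑`
inside `V` minus `e`, there is a path from `B1` to `B2`; moreover this path together with `e`
forms a cycle whose vertex set induces a clique in `𝓖⁺`. -/
theorem statement_6 (d : ℕ) (hd : 1 ≤ d) (n k0 : ℕ) (D0 : ℝ) (hD0 : 0 < D0)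
    (hn : (n : ℝ) ^ ((1 : ℝ) / d) = D0 * 2 ^ k0)
    (B1 B2 : Box d k0)
    (he : (gPlusGraph d k0 D0 ((n : ℝ) ^ ((1 : ℝ) / d))).Adj B1 B2) :
    ∃ p : (onSet
        ((boxGraph d k0 D0 ((n : ℝ) ^ ((1 : ℝ) / d))).deleteEdges {s(B1, B2)})
        {B | B = B1 ∨ (gPlusGraph d k0 D0 ((n : ℝ) ^ ((1 : ℝ) / d))).Adj B B1}).Walk B1 B2,
      p.IsPath ∧
      ∀ a ∈ p.support, ∀ b ∈ p.support, a ≠ b →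
        (gPlusGraph d k0 D0 ((n : ℝ) ^ ((1 : ℝ) / d))).Adj a b :=
  statement_6_general d hd n k0 D0 hD0 B1 B2 he
end

section
/- Let z, x1, x2 be vertices of a weighted configuration with weights w_z, w_{x1}, w_{x2} and positions x_z, x_{x1}, x_{x2} in the torus with max-norm distance dist. Suppose that for j = 1, 2 one has w_{x_j} ≥ 2^d·w_z and dist(x_{x_j}, x_z)^d ≤ w_{x_j}·w_z (i.e. x1 and x2 both satisfy the connection threshold towards z with the high-weight condition, as do all elements of S_high(B) towards a vertex z of the box B). Then w_{x1}·w_{x2} ≥ dist(x_{x1}, x_{x2})^d, i.e. x1 and x2 satisfy the threshold connection rule between themselves. -/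
open MeasureTheory ProbabilityTheory Filter Set

/-! The triangle inequality bounds `dist(x₁, x₂)` by twice the larger of `dist(x₁, z)` and
`dist(x₂, z)`, say the latter; then `dist(x₁, x₂)^d ≤ 2^d w₂ w_z ≤ w₁ w₂` by the high-weight
condition on `x₁`. -/

noncomputable def circleNorm (L a : ℝ) : ℝ :=
  ⨅ m : ℤ, |a - m * L|

lemma circleNorm_nonneg (L a : ℝ) : 0 ≤ circleNorm L a :=
  le_ciInf fun _ => abs_nonneg _

lemma circleNorm_le (L a : ℝ) (m : ℤ) : circleNorm L a ≤ |a - m * L| :=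
  ciInf_le ⟨0, by rintro r ⟨m, rfl⟩; positivity⟩ m

lemma circleNorm_add_le (L a b : ℝ) : circleNorm L (a + b) ≤ circleNorm L a + circleNorm L b :=
  le_ciInf_add_ciInf fun m₁ m₂ => calc
    circleNorm L (a + b) ≤ |a + b - ((m₁ + m₂ : ℤ) : ℝ) * L| := circleNorm_le L _ _
    _ = |(a - m₁ * L) + (b - m₂ * L)| := by push_cast; ring_nf
    _ ≤ |a - m₁ * L| + |b - m₂ * L| := abs_add_le _ _

lemma torusDist_eq_iSup_circleNorm {d : ℕ} (L : ℝ) (x y : Fin d → ℝ) :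
    torusDist L x y = ⨆ k, circleNorm L (x k - y k) :=
  rfl

lemma circleNorm_le_torusDist {d : ℕ} (L : ℝ) (x y : Fin d → ℝ) (k : Fin d) :
    circleNorm L (x k - y k) ≤ torusDist L x y :=
  le_ciSup (f := fun k => circleNorm L (x k - y k)) (Set.finite_range _).bddAbove k

lemma torusDist_nonneg {d : ℕ} (L : ℝ) (x y : Fin d → ℝ) : 0 ≤ torusDist L x y := by
  rw [torusDist_eq_iSup_circleNorm]
  exact Real.iSup_nonneg fun _ => circleNorm_nonneg L _

lemma torusDist_triangle {d : ℕ} (L : ℝ) (x y z : Fin d → ℝ) :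
    torusDist L x z ≤ torusDist L x y + torusDist L y z := by
  rw [torusDist_eq_iSup_circleNorm L x z]
  refine Real.iSup_le (fun k => ?_) (add_nonneg (torusDist_nonneg L x y) (torusDist_nonneg L y z))
  calc circleNorm L (x k - z k) = circleNorm L ((x k - y k) + (y k - z k)) := by ring_nf
    _ ≤ circleNorm L (x k - y k) + circleNorm L (y k - z k) := circleNorm_add_le L _ _
    _ ≤ torusDist L x y + torusDist L y z :=
      add_le_add (circleNorm_le_torusDist L x y k) (circleNorm_le_torusDist L y z k)

lemma pow_le_mul_of_le_two_mul {d : ℕ} {D b wz w₁ w₂ : ℝ} (hD₀ : 0 ≤ D) (hD : D ≤ 2 * b)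
    (hw₂ : 0 ≤ w₂) (hhigh₁ : 2 ^ d * wz ≤ w₁) (hb : b ^ d ≤ w₂ * wz) : D ^ d ≤ w₁ * w₂ := calc
  D ^ d ≤ (2 * b) ^ d := pow_le_pow_left₀ hD₀ hD d
  _ = 2 ^ d * b ^ d := mul_pow _ _ _
  _ ≤ 2 ^ d * (w₂ * wz) := by gcongr
  _ = (2 ^ d * wz) * w₂ := by ring
  _ ≤ w₁ * w₂ := by gcongr

lemma pow_le_mul_of_le_add {d : ℕ} {D a b wz w₁ w₂ : ℝ} (hD₀ : 0 ≤ D) (hD : D ≤ a + b)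
    (hwz : 0 ≤ wz) (hhigh₁ : 2 ^ d * wz ≤ w₁) (hhigh₂ : 2 ^ d * wz ≤ w₂)
    (ha : a ^ d ≤ w₁ * wz) (hb : b ^ d ≤ w₂ * wz) : D ^ d ≤ w₁ * w₂ := by
  have h2wz : 0 ≤ 2 ^ d * wz := by positivity
  rcases le_total a b with hab | hba
  · exact pow_le_mul_of_le_two_mul hD₀ (by linarith) (h2wz.trans hhigh₂) hhigh₁ hb
  · rw [mul_comm]
    exact pow_le_mul_of_le_two_mul hD₀ (by linarith) (h2wz.trans hhigh₁) hhigh₂ ha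

theorem statement_19_general (d n : ℕ)
    (wz w1 w2 : ℝ) (xz x1 x2 : Fin d → ℝ)
    (hwz : 1 ≤ wz)
    (hhigh1 : 2 ^ d * wz ≤ w1) (hhigh2 : 2 ^ d * wz ≤ w2)
    (hconn1 : torusDist ((n : ℝ) ^ ((1 : ℝ) / d)) x1 xz ^ d ≤ w1 * wz)
    (hconn2 : torusDist ((n : ℝ) ^ ((1 : ℝ) / d)) x2 xz ^ d ≤ w2 * wz) :
    torusDist ((n : ℝ) ^ ((1 : ℝ) / d)) x1 x2 ^ d ≤ w1 * w2 := by
  rw [torusDist_symm] at hconn2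
  exact pow_le_mul_of_le_add (torusDist_nonneg _ _ _) (torusDist_triangle _ x1 xz x2)
    (by linarith) hhigh1 hhigh2 hconn1 hconn2

/-- Let `z, x1, x2` be vertices of a weighted configuration on the torus
`[0, n^{1/d}]^d` with the max-norm torus distance.  If for `j = 1, 2` the vertex `x_j`
satisfies the high-weight condition `w_{x_j} ≥ 2^d * w_z` and the connection threshold
towards `z`, i.e. `dist(x_{x_j}, x_z)^d ≤ w_{x_j} * w_z`, then `x1` and `x2` satisfy the
threshold connection rule between themselves: `dist(x_{x1}, x_{x2})^d ≤ w_{x1} * w_{x2}`. -/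
theorem statement_19 (d n : ℕ) (hd : 1 ≤ d)
    (wz w1 w2 : ℝ) (xz x1 x2 : Fin d → ℝ)
    (hwz : 1 ≤ wz) (hw1 : 1 ≤ w1) (hw2 : 1 ≤ w2)
    (hx : ∀ k, 0 ≤ xz k ∧ xz k ≤ (n : ℝ) ^ ((1 : ℝ) / d))
    (hx1 : ∀ k, 0 ≤ x1 k ∧ x1 k ≤ (n : ℝ) ^ ((1 : ℝ) / d))
    (hx2 : ∀ k, 0 ≤ x2 k ∧ x2 k ≤ (n : ℝ) ^ ((1 : ℝ) / d))
    (hhigh1 : 2 ^ d * wz ≤ w1) (hhigh2 : 2 ^ d * wz ≤ w2)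
    (hconn1 : torusDist ((n : ℝ) ^ ((1 : ℝ) / d)) x1 xz ^ d ≤ w1 * wz)
    (hconn2 : torusDist ((n : ℝ) ^ ((1 : ℝ) / d)) x2 xz ^ d ≤ w2 * wz) :
    torusDist ((n : ℝ) ^ ((1 : ℝ) / d)) x1 x2 ^ d ≤ w1 * w2 :=
  statement_19_general d n wz w1 w2 xz x1 x2 hwz hhigh1 hhigh2 hconn1 hconn2
end
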